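/- (Weighted Rivlin–Shapiro criterion) Let K be a compact subset of ℂ, n ∈ ℕ, w : K → [0,∞) a bounded upper semicontinuous function nonzero at at least n+1 points of K, and P_n a monic polynomial of degree n. Then P_n minimizes ‖·‖_{K,w} among monic polynomials of degree n if and only if there exist m ≤ 2n+1 w-extremal points z₁, …, z_m of P_n on K and positive real numbers α₁, …, α_m with α₁ + ⋯ + α_m = 1 such that Σ_{j=1}^m α_j P_n(z_j) · conj(q(z_j)) = 0 for every polynomial q of degree at most n−1. -/

import Mathlib

/-!
Backward direction: applying the orthogonality relation to `q = Q - P` gives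
`∑ αⱼ |P(zⱼ)|² = ∑ αⱼ P(zⱼ) conj Q(zⱼ)`, and at an extremal point
`‖P‖ |Q(zⱼ)| ≤ ‖Q‖ |P(zⱼ)|`, so `‖P‖ ≤ ‖Q‖`.

Forward direction (Kolmogorov's criterion): send `z` to `Φ(z) = (P(z) conj(z^k))_{k<n}` in
`ℂⁿ ≅ ℝ²ⁿ`. If `0` were not in the convex hull of `Φ` of the compact extremal set, a separating
functional would be `v ↦ Re ⟪c, v⟫`, i.e. a polynomial `q` of degree `< n` with
`Re (P conj q) > u > 0` on the extremal set, and `P - t q` would beat `P` for small `t > 0`.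
So `0` is in the hull, and Carathéodory's theorem writes it as a convex combination of at most
`2n + 1` points `Φ(zⱼ)`; pairing with the coefficient vector of `q` turns this into the
orthogonality relation.
-/

open Polynomial Metric Set

/-- The weighted sup norm `‖P‖_{E,v} = sup_{z ∈ E} v(z) |P(z)|`. -/
noncomputable def wnorm (E : Set ℂ) (v : ℂ → ℝ) (P : Polynomial ℂ) : ℝ :=
  sSup ((fun z => v z * ‖P.eval z‖) '' E)

open Filter Topology ComplexConjugate

theorem UpperSemicontinuousOn.mul_continuousOn {α : Type*} [TopologicalSpace α] {s : Set α}
    {f g : α → ℝ} (hf : UpperSemicontinuousOn f s) (hf0 : ∀ x ∈ s, 0 ≤ f x)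
    (hg : ContinuousOn g s) (hg0 : ∀ x ∈ s, 0 ≤ g x) :
    UpperSemicontinuousOn (fun x => f x * g x) s := by
  intro x hx y hy
  obtain ⟨ε, hε, hεy⟩ : ∃ ε > 0, (f x + ε) * (g x + ε) < y := by
    have : ∀ᶠ ε in 𝓝 (0 : ℝ), (f x + ε) * (g x + ε) < y :=
      (by fun_prop : Continuous fun ε : ℝ => (f x + ε) * (g x + ε)).continuousAt.eventually_lt
        continuousAt_const (by simpa using hy)
    exact (((this.filter_mono (nhdsWithin_le_nhds (s := Ioi 0))).and
      self_mem_nhdsWithin).exists).imp fun ε h => ⟨h.2, h.1⟩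
  filter_upwards [hf x hx _ (lt_add_of_pos_right _ hε),
    (hg x hx).eventually_lt continuousWithinAt_const (lt_add_of_pos_right _ hε),
    self_mem_nhdsWithin] with z hfz hgz hz
  exact (mul_lt_mul'' hfz hgz (hf0 z hz) (hg0 z hz)).trans hεy

theorem UpperSemicontinuousOn.exists_lt_forall_le_of_forall_lt {α : Type*} [TopologicalSpace α]
    {s : Set α} {f : α → ℝ} (hs : IsCompact s) (hf : UpperSemicontinuousOn f s) {c : ℝ}
    (h : ∀ x ∈ s, f x < c) : ∃ c' < c, ∀ x ∈ s, f x ≤ c' := by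
  rcases s.eq_empty_or_nonempty with rfl | hne
  · exact ⟨c - 1, by linarith, by simp⟩
  · obtain ⟨a, ha, hmax⟩ := hf.exists_isMaxOn hne hs
    exact ⟨f a, h a ha, hmax⟩

theorem exists_fin_of_mem_convexHull_image {ι V : Type*} [AddCommGroup V] [Module ℝ V]
    [FiniteDimensional ℝ V] {f : ι → V} {E : Set ι} {x : V}
    (hx : x ∈ convexHull ℝ (f '' E)) :
    ∃ m ≤ Module.finrank ℝ V + 1, ∃ (z : Fin m → ι) (α : Fin m → ℝ),
      Function.Injective z ∧ (∀ j, z j ∈ E) ∧ (∀ j, 0 < α j) ∧ ∑ j, α j = 1 ∧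
      ∑ j, α j • f (z j) = x := by
  obtain ⟨κ, _, y, α, hy, hai, hα0, hα1, hαy⟩ := eq_pos_convex_span_of_mem_convexHull hx
  choose z hzE hzy using fun i => hy (mem_range_self i)
  have hcard : Fintype.card κ ≤ Module.finrank ℝ V + 1 :=
    hai.card_le_finrank_succ.trans (by gcongr; exact Submodule.finrank_le _)
  have hz : Function.Injective z := fun i j h => hai.injective (by rw [← hzy i, ← hzy j, h])
  let e := (Fintype.equivFin κ).symm
  refine ⟨_, hcard, z ∘ e, α ∘ e, hz.comp e.injective, fun j => hzE _, fun j => hα0 _,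
    by simpa [e] using (e.sum_comp α).trans hα1, ?_⟩
  simpa [e, hzy] using (e.sum_comp fun i => α i • y i).trans hαy

theorem IsCompact.isCompact_convexHull {V : Type*} [AddCommGroup V] [Module ℝ V]
    [FiniteDimensional ℝ V] [TopologicalSpace V] [IsTopologicalAddGroup V]
    [ContinuousSMul ℝ V] {s : Set V}
    (hs : IsCompact s) : IsCompact (convexHull ℝ s) := by
  have hull : convexHull ℝ s = ⋃ m ∈ Finset.range (Module.finrank ℝ V + 2),
      (fun p : (Fin m → ℝ) × (Fin m → V) => ∑ j, p.1 j • p.2 j) ''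
        (stdSimplex ℝ (Fin m) ×ˢ univ.pi fun _ => s) := by
    refine Subset.antisymm (fun x hx => ?_) (iUnion₂_subset fun m _ => ?_)
    · rw [← image_id s] at hx
      obtain ⟨m, hm, z, α, -, hz, hα0, hα1, rfl⟩ := exists_fin_of_mem_convexHull_image hx
      exact mem_biUnion (Finset.mem_range.2 (Nat.lt_succ_of_le hm))
        ⟨(α, z), ⟨⟨fun j => (hα0 j).le, hα1⟩, fun j _ => hz j⟩, rfl⟩
    · rintro _ ⟨⟨α, z⟩, ⟨⟨hα0, hα1⟩, hz⟩, rfl⟩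
      exact (convex_convexHull ℝ s).sum_mem (fun j _ => hα0 j) hα1
        fun j _ => subset_convexHull ℝ s (hz j (mem_univ j))
  rw [hull]
  exact (Finset.range _).isCompact_biUnion fun m _ =>
    ((isCompact_stdSimplex ℝ (Fin m)).prod (isCompact_univ_pi fun _ => hs)).image (by fun_prop)

theorem Complex.norm_sub_ofReal_mul_lt_norm {a b : ℂ} {t : ℝ} (ht : 0 < t)
    (h : t * ‖b‖ ^ 2 < 2 * (a * conj b).re) : ‖a - t * b‖ < ‖a‖ := by
  have hsq : ‖a - t * b‖ ^ 2 = ‖a‖ ^ 2 - t * (2 * (a * conj b).re - t * ‖b‖ ^ 2) := by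
    simp only [← Complex.normSq_eq_norm_sq, Complex.normSq_sub,
      Complex.normSq_ofReal, map_mul, Complex.conj_ofReal]
    rw [mul_left_comm, Complex.re_ofReal_mul]
    ring
  have : ‖a - t * b‖ ^ 2 < ‖a‖ ^ 2 := by rw [hsq]; nlinarith
  exact lt_of_pow_lt_pow_left₀ 2 (norm_nonneg a) this

theorem Polynomial.Monic.sub_of_degree_lt {R : Type*} [Ring R] [Nontrivial R] {p q : R[X]}
    {n : ℕ} (hp : p.Monic) (hpn : p.natDegree = n) (hq : q.degree < n) :
    (p - q).Monic ∧ (p - q).natDegree = n := by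
  have hpd : p.degree = n := by rw [degree_eq_natDegree hp.ne_zero, hpn]
  rw [← hpd] at hq
  exact ⟨hp.sub_of_left hq, natDegree_eq_of_degree_eq_some
    ((degree_sub_eq_left_of_degree_lt hq).trans hpd)⟩

theorem Polynomial.Monic.degree_sub_lt {R : Type*} [Ring R] [Nontrivial R] {p q : R[X]}
    {n : ℕ} (hp : p.Monic) (hq : q.Monic) (hpn : p.natDegree = n) (hqn : q.natDegree = n) :
    (p - q).degree < n := by
  have hpd : p.degree = n := by rw [degree_eq_natDegree hp.ne_zero, hpn]
  have hqd : q.degree = n := by rw [degree_eq_natDegree hq.ne_zero, hqn]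
  exact hpd ▸ degree_sub_lt_left (hpd.trans hqd.symm) hp.ne_zero
    (by rw [hp.leadingCoeff, hq.leadingCoeff])

theorem le_of_sum_mul_conj_sub_eq_zero {ι : Type*} [Fintype ι] {α : ι → ℝ} {a b : ι → ℂ}
    {M N : ℝ} (hα : ∀ j, 0 < α j) (ha : ∃ j, a j ≠ 0) (hM : 0 ≤ M)
    (hab : ∀ j, M * ‖b j‖ ≤ N * ‖a j‖)
    (horth : ∑ j, (α j : ℂ) * a j * conj (b j - a j) = 0) : M ≤ N := by
  set S := ∑ j, α j * ‖a j‖ ^ 2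
  have hS : 0 < S := by
    obtain ⟨j, hj⟩ := ha
    exact Finset.sum_pos' (fun i _ => mul_nonneg (hα i).le (sq_nonneg _))
      ⟨j, Finset.mem_univ j, mul_pos (hα j) (pow_pos (norm_pos_iff.2 hj) 2)⟩
  have hSab : ((S : ℝ) : ℂ) = ∑ j, (α j : ℂ) * a j * conj (b j) := calc
    ((S : ℝ) : ℂ) = ∑ j, ((α j : ℂ) * a j * conj (a j) + α j * a j * conj (b j - a j)) := by
      rw [Finset.sum_add_distrib, horth, add_zero]
      simp [S, mul_assoc, Complex.mul_conj']
    _ = ∑ j, (α j : ℂ) * a j * conj (b j) :=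
      Finset.sum_congr rfl fun j _ => by rw [map_sub]; ring
  have hMN : M * S ≤ N * S := calc
    M * S = M * ‖∑ j, (α j : ℂ) * a j * conj (b j)‖ := by
      rw [← hSab, Complex.norm_of_nonneg hS.le]
    _ ≤ M * ∑ j, α j * ‖a j‖ * ‖b j‖ := by
      refine mul_le_mul_of_nonneg_left ((norm_sum_le _ _).trans_eq ?_) hM
      simp [abs_of_pos (hα _)]
    _ = ∑ j, α j * ‖a j‖ * (M * ‖b j‖) :=
      Finset.mul_sum _ _ _ |>.trans (Finset.sum_congr rfl fun j _ => by ring)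
    _ ≤ ∑ j, α j * ‖a j‖ * (N * ‖a j‖) :=
      Finset.sum_le_sum fun j _ =>
        mul_le_mul_of_nonneg_left (hab j) (mul_nonneg (hα j).le (norm_nonneg _))
    _ = N * S := Finset.sum_congr rfl (fun j _ => by ring) |>.trans (Finset.mul_sum _ _ _).symm
  exact le_of_mul_le_mul_right hMN hS

noncomputable def momentVec (P : ℂ[X]) (n : ℕ) (z : ℂ) : EuclideanSpace ℂ (Fin n) :=
  WithLp.toLp 2 fun k => P.eval z * conj (z ^ (k : ℕ))

theorem inner_degreeLTEquiv_momentVec {n : ℕ} (P : ℂ[X]) {q : ℂ[X]} (hq : q ∈ degreeLT ℂ n)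
    (z : ℂ) : inner ℂ (WithLp.toLp 2 (degreeLTEquiv ℂ n ⟨q, hq⟩) : EuclideanSpace ℂ (Fin n))
      (momentVec P n z) = P.eval z * conj (q.eval z) := by
  rw [eval_eq_sum_degreeLTEquiv hq, PiLp.inner_apply, map_sum, Finset.mul_sum]
  refine Finset.sum_congr rfl fun k _ => ?_
  simp [momentVec]
  ring

theorem sum_mul_conj_eq_zero_of_sum_smul_momentVec {n : ℕ} {P : ℂ[X]} {ι : Type*} [Fintype ι]
    {z : ι → ℂ} {α : ι → ℝ} (h : ∑ j, α j • momentVec P n (z j) = 0) {q : ℂ[X]}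
    (hq : q.degree < n) : ∑ j, (α j : ℂ) * P.eval (z j) * conj (q.eval (z j)) = 0 := by
  have hq' : q ∈ degreeLT ℂ n := mem_degreeLT.2 hq
  have := congrArg (inner ℂ (WithLp.toLp 2 (degreeLTEquiv ℂ n ⟨q, hq'⟩) :
    EuclideanSpace ℂ (Fin n))) h
  simpa [inner_sum, ← Complex.coe_smul, inner_smul_real_right, inner_degreeLTEquiv_momentVec,
    mul_assoc] using this

theorem exists_re_mul_conj_gt_of_zero_notMem_convexHull {n : ℕ} {P : ℂ[X]} {E : Set ℂ}
    (hE : IsCompact E) (h : 0 ∉ convexHull ℝ (momentVec P n '' E)) :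
    ∃ q : ℂ[X], q.degree < n ∧ ∃ u > 0, ∀ z ∈ E, u < (P.eval z * conj (q.eval z)).re := by
  obtain ⟨g, u, hg0, hgE⟩ := geometric_hahn_banach_point_closed (convex_convexHull ℝ _)
    (hE.image (by unfold momentVec; fun_prop)).isCompact_convexHull.isClosed h
  set c := (InnerProductSpace.toDual ℝ (EuclideanSpace ℂ (Fin n))).symm g
  set q := (degreeLTEquiv ℂ n).symm c.ofLp
  refine ⟨q, mem_degreeLT.1 q.2, u, by simpa using hg0, fun z hz => ?_⟩
  have hc : (WithLp.toLp 2 (degreeLTEquiv ℂ n q) : EuclideanSpace ℂ (Fin n)) = c := by simp [q]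
  have := hgE _ (subset_convexHull ℝ _ (mem_image_of_mem _ hz))
  rw [← InnerProductSpace.toDual_symm_apply, PiLp.inner_apply] at this
  rw [← inner_degreeLTEquiv_momentVec P q.2, hc, PiLp.inner_apply, Complex.re_sum]
  simpa [Complex.inner] using this

theorem exists_orthogonal_weights_of_zero_mem_convexHull {n : ℕ} {P : ℂ[X]} {E : Set ℂ}
    (h : 0 ∈ convexHull ℝ (momentVec P n '' E)) :
    ∃ m ≤ 2 * n + 1, ∃ (z : Fin m → ℂ) (α : Fin m → ℝ), Function.Injective z ∧
      (∀ j, z j ∈ E) ∧ (∀ j, 0 < α j) ∧ ∑ j, α j = 1 ∧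
      ∀ q : ℂ[X], q.degree < n → ∑ j, (α j : ℂ) * P.eval (z j) * conj (q.eval (z j)) = 0 := by
  obtain ⟨m, hm, z, α, hz, hzE, hα, hα1, hsum⟩ := exists_fin_of_mem_convexHull_image h
  rw [finrank_real_of_complex, finrank_euclideanSpace_fin] at hm
  exact ⟨m, hm, z, α, hz, hzE, hα, hα1,
    fun q hq => sum_mul_conj_eq_zero_of_sum_smul_momentVec hsum hq⟩

def extremalSet (K : Set ℂ) (w : ℂ → ℝ) (P : ℂ[X]) : Set ℂ :=
  {z ∈ K | w z * ‖P.eval z‖ = wnorm K w P}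

section WeightedNorm

variable {K : Set ℂ} {w : ℂ → ℝ}

theorem bddAbove_weighted_eval (hK : IsCompact K) (hw0 : ∀ z ∈ K, 0 ≤ w z)
    (hwb : BddAbove (w '' K)) (P : ℂ[X]) :
    BddAbove ((fun z => w z * ‖P.eval z‖) '' K) := by
  obtain ⟨B, hB⟩ := hwb
  obtain ⟨C, hC⟩ := hK.exists_bound_of_continuousOn P.continuous.continuousOn
  refine ⟨B * C, forall_mem_image.2 fun z hz => ?_⟩
  exact mul_le_mul (hB (mem_image_of_mem w hz)) (by simpa using hC z hz) (norm_nonneg _)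
    ((hw0 z hz).trans (hB (mem_image_of_mem w hz)))

theorem weighted_eval_le_wnorm (hK : IsCompact K) (hw0 : ∀ z ∈ K, 0 ≤ w z)
    (hwb : BddAbove (w '' K)) (P : ℂ[X]) {z : ℂ} (hz : z ∈ K) :
    w z * ‖P.eval z‖ ≤ wnorm K w P :=
  le_csSup (bddAbove_weighted_eval hK hw0 hwb P) (mem_image_of_mem _ hz)

theorem upperSemicontinuousOn_weighted_eval (hw0 : ∀ z ∈ K, 0 ≤ w z)
    (husc : UpperSemicontinuousOn w K) (P : ℂ[X]) :
    UpperSemicontinuousOn (fun z => w z * ‖P.eval z‖) K :=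
  husc.mul_continuousOn hw0 (by fun_prop) fun _ _ => norm_nonneg _

theorem wnorm_lt_of_forall_lt (hK : IsCompact K) (hKne : K.Nonempty) (hw0 : ∀ z ∈ K, 0 ≤ w z)
    (husc : UpperSemicontinuousOn w K) {P : ℂ[X]} {c : ℝ}
    (h : ∀ z ∈ K, w z * ‖P.eval z‖ < c) : wnorm K w P < c := by
  obtain ⟨c', hc', hle⟩ :=
    (upperSemicontinuousOn_weighted_eval hw0 husc P).exists_lt_forall_le_of_forall_lt hK h
  exact (csSup_le (hKne.image _) (forall_mem_image.2 hle)).trans_lt hc'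

theorem wnorm_pos (hK : IsCompact K) (hw0 : ∀ z ∈ K, 0 ≤ w z) (hwb : BddAbove (w '' K))
    {S : Finset ℂ} (hSK : ↑S ⊆ K) (hSw : ∀ z ∈ S, w z ≠ 0) {P : ℂ[X]} (hP : P ≠ 0)
    (hcard : P.natDegree < S.card) : 0 < wnorm K w P := by
  obtain ⟨z, hzS, hPz⟩ : ∃ z ∈ S, P.eval z ≠ 0 := by
    by_contra! h
    exact hP (eq_zero_of_natDegree_lt_card_of_eval_eq_zero' P S h hcard)
  exact (mul_pos ((hw0 z (hSK hzS)).lt_of_ne (hSw z hzS).symm) (norm_pos_iff.2 hPz)).trans_le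
    (weighted_eval_le_wnorm hK hw0 hwb P (hSK hzS))

theorem isCompact_extremalSet (hK : IsCompact K) (hw0 : ∀ z ∈ K, 0 ≤ w z)
    (hwb : BddAbove (w '' K)) (husc : UpperSemicontinuousOn w K) (P : ℂ[X]) :
    IsCompact (extremalSet K w P) := by
  convert (upperSemicontinuousOn_weighted_eval hw0 husc P).isCompact_inter_preimage_Ici hK
    (wnorm K w P) using 1
  ext z
  exact and_congr_right fun hz =>
    ⟨ge_of_eq, (weighted_eval_le_wnorm hK hw0 hwb P hz).antisymm⟩

theorem wnorm_le_of_sum_mul_conj_eq_zero (hK : IsCompact K) (hw0 : ∀ z ∈ K, 0 ≤ w z)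
    (hwb : BddAbove (w '' K)) {P Q : ℂ[X]} (hP : 0 < wnorm K w P) {ι : Type*} [Fintype ι]
    [Nonempty ι] {z : ι → ℂ} {α : ι → ℝ} (hz : ∀ j, z j ∈ extremalSet K w P)
    (hα : ∀ j, 0 < α j)
    (horth : ∑ j, (α j : ℂ) * P.eval (z j) * conj ((Q - P).eval (z j)) = 0) :
    wnorm K w P ≤ wnorm K w Q := by
  refine le_of_sum_mul_conj_sub_eq_zero hα ?_ hP.le (fun j => ?_) (by simpa using horth)
  · obtain ⟨j⟩ := ‹Nonempty ι›
    refine ⟨j, fun h => hP.ne ?_⟩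
    rw [← (hz j).2, h, norm_zero, mul_zero]
  · calc wnorm K w P * ‖Q.eval (z j)‖ = ‖P.eval (z j)‖ * (w (z j) * ‖Q.eval (z j)‖) := by
          rw [← (hz j).2]; ring
      _ ≤ ‖P.eval (z j)‖ * wnorm K w Q :=
          mul_le_mul_of_nonneg_left (weighted_eval_le_wnorm hK hw0 hwb Q (hz j).1) (norm_nonneg _)
      _ = wnorm K w Q * ‖P.eval (z j)‖ := mul_comm _ _

theorem exists_wnorm_sub_smul_lt (hK : IsCompact K) (hw0 : ∀ z ∈ K, 0 ≤ w z)
    (hwb : BddAbove (w '' K)) (husc : UpperSemicontinuousOn w K) {P q : ℂ[X]}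
    (hP : 0 < wnorm K w P) {u : ℝ} (hu : 0 < u)
    (hq : ∀ z ∈ extremalSet K w P, u < (P.eval z * conj (q.eval z)).re) :
    ∃ t : ℝ, 0 < t ∧ wnorm K w (P - (t : ℂ) • q) < wnorm K w P := by
  set M := wnorm K w P
  have hKne : K.Nonempty := nonempty_iff_ne_empty.2 fun h => by simp [M, wnorm, h] at hP
  -- Near the extremal set `q` points into `P`; away from it `w |P|` stays below some `M₁ < M`.
  let U := {z : ℂ | u / 2 < (P.eval z * conj (q.eval z)).re}
  have hU : IsOpen U := isOpen_lt continuous_const (by fun_prop)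
  obtain ⟨M₁, hM₁, hPM₁⟩ : ∃ M₁ < M, ∀ z ∈ K \ U, w z * ‖P.eval z‖ ≤ M₁ :=
    ((upperSemicontinuousOn_weighted_eval hw0 husc P).mono
      sdiff_subset).exists_lt_forall_le_of_forall_lt (hK.diff hU) fun z hz =>
        (weighted_eval_le_wnorm hK hw0 hwb P hz.1).lt_of_ne
          fun h => hz.2 (by linarith [hq z ⟨hz.1, h⟩] : u / 2 < _)
  have ⟨B, hB⟩ := hwb
  obtain ⟨D, hD⟩ := hK.exists_bound_of_continuousOn q.continuous.continuousOn
  obtain ⟨t, ⟨htM, htu⟩, ht⟩ : ∃ t : ℝ, (t * (B * D) < M - M₁ ∧ t * D ^ 2 < u) ∧ 0 < t := by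
    have : ∀ᶠ t in 𝓝 (0 : ℝ), t * (B * D) < M - M₁ ∧ t * D ^ 2 < u :=
      (((continuous_mul_const _).tendsto' 0 0 (zero_mul _)).eventually_lt_const
        (by linarith)).and
      (((continuous_mul_const _).tendsto' 0 0 (zero_mul _)).eventually_lt_const hu)
    exact ((this.filter_mono (nhdsWithin_le_nhds (s := Ioi 0))).and self_mem_nhdsWithin).exists
  refine ⟨t, ht, wnorm_lt_of_forall_lt hK hKne hw0 husc fun z hz => ?_⟩
  have hwB : w z ≤ B := hB (mem_image_of_mem w hz)
  have hqD : ‖q.eval z‖ ≤ D := by simpa using hD z hz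
  rw [eval_sub, eval_smul, smul_eq_mul]
  by_cases hzU : z ∈ U
  · have hlt : ‖P.eval z - t * q.eval z‖ < ‖P.eval z‖ := by
      refine Complex.norm_sub_ofReal_mul_lt_norm ht ?_
      have : ‖q.eval z‖ ^ 2 ≤ D ^ 2 := pow_le_pow_left₀ (norm_nonneg _) hqD 2
      have hzU' : u / 2 < (P.eval z * conj (q.eval z)).re := hzU
      nlinarith
    rcases (hw0 z hz).eq_or_lt with hw | hw
    · rwa [← hw, zero_mul]
    · exact (mul_lt_mul_of_pos_left hlt hw).trans_le (weighted_eval_le_wnorm hK hw0 hwb P hz)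
  · calc w z * ‖P.eval z - t * q.eval z‖
        ≤ w z * ‖P.eval z‖ + t * (w z * ‖q.eval z‖) := by
          have := norm_sub_le (P.eval z) (t * q.eval z)
          rw [norm_mul, Complex.norm_of_nonneg ht.le] at this
          nlinarith [hw0 z hz]
      _ ≤ M₁ + t * (B * D) := add_le_add (hPM₁ z ⟨hz, hzU⟩) (mul_le_mul_of_nonneg_left
          (mul_le_mul hwB hqD (norm_nonneg _) ((hw0 z hz).trans hwB)) ht.le)
      _ < M := by linarith

theorem zero_mem_convexHull_momentVec_of_forall_wnorm_le (hK : IsCompact K)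
    (hw0 : ∀ z ∈ K, 0 ≤ w z) (hwb : BddAbove (w '' K)) (husc : UpperSemicontinuousOn w K)
    {n : ℕ} {P : ℂ[X]} (hmonic : P.Monic) (hdeg : P.natDegree = n) (hP : 0 < wnorm K w P)
    (hmin : ∀ Q : ℂ[X], Q.Monic → Q.natDegree = n → wnorm K w P ≤ wnorm K w Q) :
    0 ∈ convexHull ℝ (momentVec P n '' extremalSet K w P) := by
  by_contra h
  obtain ⟨q, hq, u, hu, hqE⟩ :=
    exists_re_mul_conj_gt_of_zero_notMem_convexHull (isCompact_extremalSet hK hw0 hwb husc P) h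
  obtain ⟨t, -, ht⟩ := exists_wnorm_sub_smul_lt hK hw0 hwb husc hP hu hqE
  obtain ⟨hQ, hQn⟩ := hmonic.sub_of_degree_lt hdeg ((degree_smul_le (t : ℂ) q).trans_lt hq)
  exact (hmin _ hQ hQn).not_gt ht

end WeightedNorm

/-- Weighted Rivlin–Shapiro criterion. -/
theorem stmt11 (K : Set ℂ) (hK : IsCompact K) (n : ℕ) (w : ℂ → ℝ)
    (hw0 : ∀ z ∈ K, 0 ≤ w z) (hwb : BddAbove (w '' K))
    (husc : UpperSemicontinuousOn w K)
    (hsupp : ∃ S : Finset ℂ, ↑S ⊆ K ∧ n + 1 ≤ S.card ∧ ∀ z ∈ S, w z ≠ 0)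
    (P : Polynomial ℂ) (hmonic : P.Monic) (hdeg : P.natDegree = n) :
    (∀ Q : Polynomial ℂ, Q.Monic → Q.natDegree = n → wnorm K w P ≤ wnorm K w Q) ↔
      ∃ (m : ℕ), m ≤ 2 * n + 1 ∧
        ∃ (z : Fin m → ℂ) (α : Fin m → ℝ),
          Function.Injective z ∧
          (∀ j, z j ∈ K ∧ w (z j) * ‖P.eval (z j)‖ = wnorm K w P) ∧
          (∀ j, 0 < α j) ∧ (∑ j, α j) = 1 ∧
          ∀ q : Polynomial ℂ, q.degree < n →
            (∑ j, (α j : ℂ) * P.eval (z j) * (starRingEnd ℂ) (q.eval (z j))) = 0 := by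
  obtain ⟨S, hSK, hS, hSw⟩ := hsupp
  have hP : 0 < wnorm K w P := wnorm_pos hK hw0 hwb hSK hSw hmonic.ne_zero (by omega)
  constructor
  · intro hmin
    exact exists_orthogonal_weights_of_zero_mem_convexHull
      (zero_mem_convexHull_momentVec_of_forall_wnorm_le hK hw0 hwb husc hmonic hdeg hP hmin)
  · rintro ⟨m, -, z, α, -, hz, hα, hα1, horth⟩ Q hQ hQn
    have : Nonempty (Fin m) :=
      Fin.pos_iff_nonempty.1 (Nat.pos_of_ne_zero (by rintro rfl; simp at hα1))
    exact wnorm_le_of_sum_mul_conj_eq_zero hK hw0 hwb hP hz hα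
      (horth _ (hQ.degree_sub_lt hmonic hQn hdeg))
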